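/- arXiv:0905.0350 — 2 statements merged into one kernel-verified Lean document; each statement's English description precedes it below -/
import Mathlib

section
/- The weighted reciprocity relation: for multi-indices a, b of positive integers with nonzero real weights σ = (σ_1,…,σ_r), τ = (τ_1,…,τ_s), N ≥ 1 and 1 ≤ j ≤ N: Σ_{k=1}^{j} ζ_{k-1}(b_2,τ_2) ζ_{N-k}(a,σ) / (k^{b_1} τ_1^{k}) + Σ_{k=1}^{N+1-j} ζ_{k-1}(a_2,σ_2) ζ_{N-k}(b,τ) / (k^{a_1} σ_1^{k}) = ζ_{N+1-j}(a,σ) ζ_j(b,τ) − ζ_{j-1}(b_2,τ_2) ζ_{N-j}(a_2,σ_2) / (τ_1^{j} j^{b_1} σ_1^{N+1-j} (N+1-j)^{a_1}) + R_N(a,σ; b,τ), where R_N(a,σ; b,τ) = Σ_{k=1}^{N} ζ_{N-k}(b,τ) ζ_{k-1}(a_2,σ_2) / (σ_1^{k} k^{a_1}). -/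
open Finset

private lemma extend_sum {N n : ℕ} (hn : n ≤ N) (f : ℕ → ℝ) :
    ∑ x ∈ Icc 1 n, f x = ∑ x ∈ Icc 1 N, if x ≤ n then f x else 0 := by
  rw [← Finset.sum_filter]
  congr 1
  ext x
  simp only [mem_filter, mem_Icc]
  omega

private lemma double_ext {N : ℕ} (n : ℕ) (g : ℕ → ℕ) (hn : n ≤ N) (hg : ∀ k, g k ≤ N)
    (f : ℕ → ℕ → ℝ) :
    ∑ k ∈ Icc 1 n, ∑ m ∈ Icc 1 (g k), f k m
      = ∑ k ∈ Icc 1 N, ∑ m ∈ Icc 1 N, if k ≤ n ∧ m ≤ g k then f k m else 0 := by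
  rw [extend_sum hn]
  refine sum_congr rfl fun k _ => ?_
  split_ifs with h
  · rw [extend_sum (hg k)]
    exact sum_congr rfl fun m _ => by simp [h]
  · exact (sum_eq_zero fun m _ => by simp [h]).symm

private lemma key (N j : ℕ) (hj : 1 ≤ j) (hjN : j ≤ N) (f : ℕ → ℕ → ℝ) :
    (∑ k ∈ Icc 1 j, ∑ m ∈ Icc 1 (N - k), f k m)
      + ∑ k ∈ Icc 1 (N + 1 - j), ∑ m ∈ Icc 1 (N - k), f m k
    = (∑ m ∈ Icc 1 (N + 1 - j), ∑ k ∈ Icc 1 j, f k m)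
      - f j (N + 1 - j)
      + ∑ k ∈ Icc 1 N, ∑ m ∈ Icc 1 (N - k), f m k := by
  have h1 : ∑ k ∈ Icc 1 j, ∑ m ∈ Icc 1 (N - k), f k m
      = ∑ k ∈ Icc 1 N, ∑ m ∈ Icc 1 N, if k ≤ j ∧ m ≤ N - k then f k m else 0 :=
    double_ext j (fun k => N - k) hjN (fun k => Nat.sub_le _ _) f
  have h2 : ∑ k ∈ Icc 1 (N + 1 - j), ∑ m ∈ Icc 1 (N - k), f m k
      = ∑ k ∈ Icc 1 N, ∑ m ∈ Icc 1 N, if m ≤ N + 1 - j ∧ k ≤ N - m then f k m else 0 := by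
    rw [double_ext (N + 1 - j) (fun k => N - k) (by omega) (fun k => Nat.sub_le _ _)
      (fun k m => f m k), Finset.sum_comm]
  have h3 : ∑ m ∈ Icc 1 (N + 1 - j), ∑ k ∈ Icc 1 j, f k m
      = ∑ k ∈ Icc 1 N, ∑ m ∈ Icc 1 N, if m ≤ N + 1 - j ∧ k ≤ j then f k m else 0 := by
    rw [double_ext (N + 1 - j) (fun _ => j) (by omega) (fun _ => hjN) (fun m k => f k m),
      Finset.sum_comm]
  have h5 : ∑ k ∈ Icc 1 N, ∑ m ∈ Icc 1 (N - k), f m k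
      = ∑ k ∈ Icc 1 N, ∑ m ∈ Icc 1 N, if m ≤ N ∧ k ≤ N - m then f k m else 0 := by
    rw [double_ext N (fun k => N - k) le_rfl (fun k => Nat.sub_le _ _) (fun k m => f m k),
      Finset.sum_comm]
  have h4 : (∑ k ∈ Icc 1 N, ∑ m ∈ Icc 1 N, if k = j ∧ m = N + 1 - j then f k m else 0)
      = f j (N + 1 - j) := by
    rw [Finset.sum_eq_single j (fun k _ hk => sum_eq_zero fun m _ => by simp [hk])
        (fun h => absurd (mem_Icc.2 ⟨hj, hjN⟩) h)]
    rw [Finset.sum_eq_single (N + 1 - j) (fun m _ hm => by simp [hm])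
        (fun h => absurd (mem_Icc.2 ⟨by omega, by omega⟩) h)]
    simp
  rw [h1, h2, h3, h5, ← h4]
  rw [← Finset.sum_add_distrib, ← Finset.sum_sub_distrib, ← Finset.sum_add_distrib]
  refine sum_congr rfl fun k hk => ?_
  rw [← Finset.sum_add_distrib, ← Finset.sum_sub_distrib, ← Finset.sum_add_distrib]
  refine sum_congr rfl fun m hm => ?_
  simp only [mem_Icc] at hk hm
  split_ifs <;> first | ring1 | (exfalso; omega)

/-- `zetaW N [(a₁,σ₁),…,(a_r,σ_r)]` is the weighted finite multiple zeta value
`ζ_N(a,σ) = Σ_{N ≥ n₁ > ⋯ > n_r ≥ 1} Π 1/(nᵢ^{aᵢ} σᵢ^{nᵢ})`; `ζ_N` of the empty index is `1`. -/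
noncomputable def zetaW : ℕ → List (ℕ × ℝ) → ℝ
  | _, [] => 1
  | N, p :: rest => ∑ n ∈ Finset.Icc 1 N, zetaW (n - 1) rest / ((n : ℝ) ^ p.1 * p.2 ^ n)

/-- The reciprocity relation for weighted finite multiple zeta values (Theorem 2). -/
theorem weighted_reciprocity (N j : ℕ) (a₁ b₁ : ℕ) (σ₁ τ₁ : ℝ)
    (as bs : List (ℕ × ℝ))
    (ha : ∀ p ∈ (a₁, σ₁) :: as, 1 ≤ p.1 ∧ p.2 ≠ 0)
    (hb : ∀ p ∈ (b₁, τ₁) :: bs, 1 ≤ p.1 ∧ p.2 ≠ 0)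
    (hN : 1 ≤ N) (hj : 1 ≤ j) (hjN : j ≤ N) :
    (∑ k ∈ Finset.Icc 1 j,
        zetaW (k - 1) bs * zetaW (N - k) ((a₁, σ₁) :: as) / ((k : ℝ) ^ b₁ * τ₁ ^ k))
      + ∑ k ∈ Finset.Icc 1 (N + 1 - j),
        zetaW (k - 1) as * zetaW (N - k) ((b₁, τ₁) :: bs) / ((k : ℝ) ^ a₁ * σ₁ ^ k) =
    zetaW (N + 1 - j) ((a₁, σ₁) :: as) * zetaW j ((b₁, τ₁) :: bs)
      - zetaW (j - 1) bs * zetaW (N - j) as /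
          (τ₁ ^ j * (j : ℝ) ^ b₁ * σ₁ ^ (N + 1 - j) * ((N + 1 - j : ℕ) : ℝ) ^ a₁)
      + ∑ k ∈ Finset.Icc 1 N,
          zetaW (N - k) ((b₁, τ₁) :: bs) * zetaW (k - 1) as / (σ₁ ^ k * (k : ℝ) ^ a₁) := by
  have hkey := key N j hj hjN
    (fun k m => zetaW (k - 1) bs * zetaW (m - 1) as /
      ((k : ℝ) ^ b₁ * τ₁ ^ k * ((m : ℝ) ^ a₁ * σ₁ ^ m)))
  beta_reduce at hkey
  simp only [zetaW]
  have e1 : ∑ k ∈ Icc 1 j,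
      zetaW (k - 1) bs * (∑ n ∈ Icc 1 (N - k), zetaW (n - 1) as / ((n : ℝ) ^ a₁ * σ₁ ^ n)) /
        ((k : ℝ) ^ b₁ * τ₁ ^ k)
      = ∑ k ∈ Icc 1 j, ∑ m ∈ Icc 1 (N - k),
          zetaW (k - 1) bs * zetaW (m - 1) as /
            ((k : ℝ) ^ b₁ * τ₁ ^ k * ((m : ℝ) ^ a₁ * σ₁ ^ m)) := by
    refine sum_congr rfl fun k _ => ?_
    rw [Finset.mul_sum, Finset.sum_div]
    exact sum_congr rfl fun m _ => by ring
  have e2 : ∑ k ∈ Icc 1 (N + 1 - j),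
      zetaW (k - 1) as * (∑ n ∈ Icc 1 (N - k), zetaW (n - 1) bs / ((n : ℝ) ^ b₁ * τ₁ ^ n)) /
        ((k : ℝ) ^ a₁ * σ₁ ^ k)
      = ∑ k ∈ Icc 1 (N + 1 - j), ∑ m ∈ Icc 1 (N - k),
          zetaW (m - 1) bs * zetaW (k - 1) as /
            ((m : ℝ) ^ b₁ * τ₁ ^ m * ((k : ℝ) ^ a₁ * σ₁ ^ k)) := by
    refine sum_congr rfl fun k _ => ?_
    rw [Finset.mul_sum, Finset.sum_div]
    exact sum_congr rfl fun m _ => by ring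
  have e3 : (∑ n ∈ Icc 1 (N + 1 - j), zetaW (n - 1) as / ((n : ℝ) ^ a₁ * σ₁ ^ n)) *
        (∑ n ∈ Icc 1 j, zetaW (n - 1) bs / ((n : ℝ) ^ b₁ * τ₁ ^ n))
      = ∑ m ∈ Icc 1 (N + 1 - j), ∑ k ∈ Icc 1 j,
          zetaW (k - 1) bs * zetaW (m - 1) as /
            ((k : ℝ) ^ b₁ * τ₁ ^ k * ((m : ℝ) ^ a₁ * σ₁ ^ m)) := by
    rw [Finset.sum_mul_sum]
    exact sum_congr rfl fun m _ => sum_congr rfl fun k _ => by ring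
  have e4 : zetaW (j - 1) bs * zetaW (N - j) as /
        (τ₁ ^ j * (j : ℝ) ^ b₁ * σ₁ ^ (N + 1 - j) * ((N + 1 - j : ℕ) : ℝ) ^ a₁)
      = zetaW (j - 1) bs * zetaW (N + 1 - j - 1) as /
          ((j : ℝ) ^ b₁ * τ₁ ^ j * (((N + 1 - j : ℕ) : ℝ) ^ a₁ * σ₁ ^ (N + 1 - j))) := by
    rw [show N + 1 - j - 1 = N - j by omega]
    ring
  have e5 : ∑ k ∈ Icc 1 N,
      (∑ n ∈ Icc 1 (N - k), zetaW (n - 1) bs / ((n : ℝ) ^ b₁ * τ₁ ^ n)) * zetaW (k - 1) as /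
        (σ₁ ^ k * (k : ℝ) ^ a₁)
      = ∑ k ∈ Icc 1 N, ∑ m ∈ Icc 1 (N - k),
          zetaW (m - 1) bs * zetaW (k - 1) as /
            ((m : ℝ) ^ b₁ * τ₁ ^ m * ((k : ℝ) ^ a₁ * σ₁ ^ k)) := by
    refine sum_congr rfl fun k _ => ?_
    rw [Finset.sum_mul, Finset.sum_div]
    exact sum_congr rfl fun m _ => by ring
  rw [e1, e2, e3, e4, e5]
  exact hkey
end

section
/- The weighted R_N satisfies the symmetry R_N(a,σ; b,τ) = R_N(b,τ; a,σ), i.e. Σ_{k=1}^{N} ζ_{N-k}(b,τ) ζ_{k-1}(a_2,σ_2) / (σ_1^{k} k^{a_1}) = Σ_{k=1}^{N} ζ_{N-k}(a,σ) ζ_{k-1}(b_2,τ_2) / (τ_1^{k} k^{b_1}). -/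
/-- Symmetry of the weighted quantity `R_N(a,σ;b,τ) = R_N(b,τ;a,σ)`. -/
theorem weighted_R_symm (N : ℕ) (a₁ b₁ : ℕ) (σ₁ τ₁ : ℝ) (as bs : List (ℕ × ℝ))
    (ha : ∀ p ∈ (a₁, σ₁) :: as, 1 ≤ p.1 ∧ p.2 ≠ 0)
    (hb : ∀ p ∈ (b₁, τ₁) :: bs, 1 ≤ p.1 ∧ p.2 ≠ 0) :
    ∑ k ∈ Finset.Icc 1 N,
        zetaW (N - k) ((b₁, τ₁) :: bs) * zetaW (k - 1) as / (σ₁ ^ k * (k : ℝ) ^ a₁) =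
    ∑ k ∈ Finset.Icc 1 N,
        zetaW (N - k) ((a₁, σ₁) :: as) * zetaW (k - 1) bs / (τ₁ ^ k * (k : ℝ) ^ b₁) := by
  have hmem : ∀ k m : ℕ, k ∈ Finset.Icc 1 N ∧ m ∈ Finset.Icc 1 (N - k) ↔
      k ∈ Finset.Icc 1 (N - m) ∧ m ∈ Finset.Icc 1 N := by
    intro k m; simp only [Finset.mem_Icc]; omega
  calc ∑ k ∈ Finset.Icc 1 N,
        zetaW (N - k) ((b₁, τ₁) :: bs) * zetaW (k - 1) as / (σ₁ ^ k * (k : ℝ) ^ a₁)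
      = ∑ k ∈ Finset.Icc 1 N, ∑ m ∈ Finset.Icc 1 (N - k),
          (zetaW (m - 1) bs / ((m : ℝ) ^ b₁ * τ₁ ^ m)) *
          (zetaW (k - 1) as / (σ₁ ^ k * (k : ℝ) ^ a₁)) := by
        refine Finset.sum_congr rfl fun k _ => ?_
        rw [zetaW, Finset.sum_mul, Finset.sum_div]
        exact Finset.sum_congr rfl fun m _ => by ring
    _ = ∑ m ∈ Finset.Icc 1 N, ∑ k ∈ Finset.Icc 1 (N - m),
          (zetaW (m - 1) bs / ((m : ℝ) ^ b₁ * τ₁ ^ m)) *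
          (zetaW (k - 1) as / (σ₁ ^ k * (k : ℝ) ^ a₁)) := Finset.sum_comm' hmem
    _ = ∑ m ∈ Finset.Icc 1 N,
        zetaW (N - m) ((a₁, σ₁) :: as) * zetaW (m - 1) bs / (τ₁ ^ m * (m : ℝ) ^ b₁) := by
        refine Finset.sum_congr rfl fun m _ => ?_
        rw [zetaW, Finset.sum_mul, Finset.sum_div]
        exact Finset.sum_congr rfl fun k _ => by ring
end
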